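/- arXiv:1710.03043 — 4 statements merged into one kernel-verified Lean document; each statement's English description precedes it below -/
import Mathlib

section
/- (Kronecker's theorem) If λ_1, …, λ_n are real numbers that are linearly independent over ℚ, then for any real numbers κ_1, …, κ_n and any ε > 0 there exists t ∈ ℝ such that the distance from λ_j t - κ_j to 2πℤ is less than ε for every j = 1, …, n. -/
/-!
Bohr's argument. Put `λ₀ = κ₀ = 0` and `F t = ∑_{j=0}^n exp(i(λⱼ t - κⱼ))`. Expanding `|F t|^(2k)`
gives a trigonometric polynomial whose mean value is the number `M_k` of pairs of `k`-tuples of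
indices with equal frequency sums `∑ λ_{mᵢ}`. Rational independence of `λ₁, …, λₙ` means that
`λ₀, …, λₙ` are affinely independent over `ℚ`, so equal frequency sums force equal multiplicities,
hence equal phase sums (which is why no phase survives in the mean), and Cauchy–Schwarz over the
`≤ (k+1)^(n+1)` multiplicity vectors gives `M_k ≥ (n+1)^(2k) / (k+1)^(n+1)`. Thus `sup |F|` is
`n + 1`, and `|F t|` close to `n + 1` forces every `exp(i(λⱼ t - κⱼ))` close to the `j = 0`
term `1`.
-/

open Complex Filter Finset
open scoped Real Topology ComplexConjugate

lemma norm_integral_exp_ofReal_mul_I_le {μ : ℝ} (hμ : μ ≠ 0) (c T : ℝ) :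
    ‖∫ t in (0 : ℝ)..T, exp (↑(μ * t - c) * I)‖ ≤ 2 / |μ| := by
  have hμI : (μ : ℂ) * I ≠ 0 := by simp [hμ]
  have hint : ∫ t in (0 : ℝ)..T, exp (↑(μ * t - c) * I)
      = exp (↑(-c) * I) * ((exp (μ * I * T) - 1) / (μ * I)) := by
    have := integral_exp_mul_complex (a := 0) (b := T) hμI
    rw [ofReal_zero, mul_zero, exp_zero] at this
    rw [← this, ← intervalIntegral.integral_const_mul]
    congr 1; ext t; rw [← Complex.exp_add]; congr 1; push_cast; ring
  have hnum : ‖exp (μ * I * T) - 1‖ ≤ 2 := by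
    calc ‖exp (μ * I * T) - 1‖ ≤ ‖exp (↑(μ * T) * I)‖ + ‖(1 : ℂ)‖ := by
          rw [show (μ : ℂ) * I * T = ↑(μ * T) * I by push_cast; ring]
          exact norm_sub_le _ _
      _ = 2 := by rw [norm_exp_ofReal_mul_I, norm_one]; norm_num
  rw [hint, norm_mul, norm_exp_ofReal_mul_I, one_mul, norm_div, norm_mul, norm_I, mul_one,
    norm_real, Real.norm_eq_abs]
  gcongr

lemma tendsto_mean_exp_ofReal_mul_I {μ c : ℝ} (h : μ = 0 → c = 0) :
    Tendsto (fun T : ℝ => (T : ℂ)⁻¹ * ∫ t in (0 : ℝ)..T, exp (↑(μ * t - c) * I)) atTop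
      (𝓝 (if μ = 0 then 1 else 0)) := by
  by_cases hμ : μ = 0
  · obtain rfl := h hμ
    subst hμ
    refine tendsto_const_nhds.congr' ?_
    filter_upwards [eventually_ne_atTop 0] with T hT
    simp [hT]
  · rw [if_neg hμ]
    refine squeeze_zero_norm' ?_ ((tendsto_inv_atTop_zero).const_mul (2 / |μ|) |>.trans (by simp))
    filter_upwards [eventually_gt_atTop 0] with T hT
    rw [norm_mul, norm_inv, norm_real, Real.norm_of_nonneg hT.le, mul_comm]
    gcongr
    exact norm_integral_exp_ofReal_mul_I_le hμ c T

lemma tendsto_mean_sum_exp_ofReal_mul_I {P : Type*} [Fintype P] {μ c : P → ℝ}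
    (h : ∀ p, μ p = 0 → c p = 0) :
    Tendsto (fun T : ℝ => (T : ℂ)⁻¹ * ∫ t in (0 : ℝ)..T, ∑ p, exp (↑(μ p * t - c p) * I)) atTop
      (𝓝 (#{p | μ p = 0} : ℂ)) := by
  have hcont (p : P) : Continuous fun t : ℝ => exp (↑(μ p * t - c p) * I) := by fun_prop
  simp_rw [intervalIntegral.integral_finsetSum fun p _ => (hcont p).intervalIntegrable 0 _,
    Finset.mul_sum, Finset.natCast_card_filter]
  exact tendsto_finsetSum _ fun p _ => tendsto_mean_exp_ofReal_mul_I (h p)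

lemma exists_lt_of_lt_tendsto_mean {G : ℝ → ℝ} (hG : Continuous G) {M b : ℝ}
    (hM : Tendsto (fun T => T⁻¹ * ∫ t in (0 : ℝ)..T, G t) atTop (𝓝 M)) (hb : b < M) :
    ∃ t, b < G t := by
  by_contra! hGb
  refine hb.not_ge (le_of_tendsto hM ?_)
  filter_upwards [eventually_gt_atTop 0] with T hT
  have hconst : ∫ _ in (0 : ℝ)..T, b = T * b := by simp
  rw [inv_mul_le_iff₀ hT, ← hconst]
  exact intervalIntegral.integral_mono_on (by linarith) (hG.intervalIntegrable _ _)
    intervalIntegrable_const fun t _ => hGb t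

section Expansion

variable {ι : Type*} [Fintype ι]

lemma sum_exp_ofReal_mul_I_pow (x : ι → ℝ) (k : ℕ) :
    (∑ j, exp (↑(x j) * I)) ^ k = ∑ m : Fin k → ι, exp (↑(∑ i, x (m i)) * I) := by
  simp only [Fintype.sum_pow, ← Complex.exp_sum, ofReal_sum, Finset.sum_mul]

lemma normSq_sum_exp_ofReal_mul_I_pow (x : ι → ℝ) (k : ℕ) :
    (normSq (∑ j, exp (↑(x j) * I)) : ℂ) ^ k =
      ∑ p : (Fin k → ι) × (Fin k → ι), exp (↑(∑ i, x (p.1 i) - ∑ i, x (p.2 i)) * I) := by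
  rw [← mul_conj, mul_pow, ← map_pow, sum_exp_ofReal_mul_I_pow, map_sum, Finset.sum_mul_sum,
    ← Fintype.sum_prod_type']
  refine Fintype.sum_congr _ _ fun p => ?_
  rw [← exp_conj, ← Complex.exp_add]
  congr 1
  simp only [map_mul, conj_ofReal, conj_I]
  push_cast
  ring

end Expansion

lemma sq_card_le_card_mul_card_filter_eq {A B : Type*} [Fintype A] [DecidableEq B] (f : A → B)
    (s : Finset B) (hf : ∀ a, f a ∈ s) :
    Fintype.card A ^ 2 ≤ #s * #{p : A × A | f p.1 = f p.2} := by
  have hA : Fintype.card A = ∑ b ∈ s, #{a | f a = b} :=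
    card_eq_sum_card_fiberwise fun a _ => hf a
  have hpairs : #{p : A × A | f p.1 = f p.2} = ∑ b ∈ s, #{a | f a = b} ^ 2 := by
    rw [card_eq_sum_card_fiberwise (f := fun p => f p.1) fun p _ => hf p.1]
    refine sum_congr rfl fun b _ => ?_
    rw [sq, ← card_product]
    congr 1
    ext p
    simp only [mem_filter, mem_univ, true_and, mem_product]
    constructor
    · rintro ⟨h, rfl⟩; exact ⟨rfl, h.symm⟩
    · rintro ⟨h1, h2⟩; exact ⟨h1.trans h2.symm, h1⟩
  rw [hA, hpairs]
  exact sq_sum_le_card_mul_sum_sq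

section FiberCard

variable {α ι : Type*} [Fintype α] [DecidableEq ι]

def fiberCard (m : α → ι) (j : ι) : ℕ := #{i | m i = j}

lemma sum_comp_eq_sum_fiberCard_smul [Fintype ι] {M : Type*} [AddCommMonoid M] (L : ι → M)
    (m : α → ι) : ∑ i, L (m i) = ∑ j, fiberCard m j • L j := by
  rw [← sum_fiberwise univ m]
  refine sum_congr rfl fun j _ => ?_
  rw [fiberCard, ← sum_const]
  exact sum_congr rfl fun i hi => by rw [(mem_filter.mp hi).2]

lemma sum_comp_eq_of_fiberCard_eq [Fintype ι] {M : Type*} [AddCommMonoid M] (L : ι → M)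
    {m m' : α → ι} (h : fiberCard m = fiberCard m') : ∑ i, L (m i) = ∑ i, L (m' i) := by
  rw [sum_comp_eq_sum_fiberCard_smul, h, ← sum_comp_eq_sum_fiberCard_smul]

lemma fiberCard_le (m : α → ι) (j : ι) : fiberCard m j ≤ Fintype.card α :=
  card_filter_le _ _

lemma AffineIndependent.fiberCard_eq_of_sum_eq [Fintype ι] {R V : Type*} [Ring R] [CharZero R]
    [AddCommGroup V] [Module R V] {L : ι → V} (hL : AffineIndependent R L) {m m' : α → ι}
    (h : ∑ i, L (m i) = ∑ i, L (m' i)) : fiberCard m = fiberCard m' := by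
  have hcard (m : α → ι) : ∑ j, (fiberCard m j : R) = Fintype.card α := by
    exact_mod_cast (card_eq_sum_card_fiberwise (t := univ) fun i _ => mem_univ (m i)).symm
  have hsmul (m : α → ι) : ∑ j, (fiberCard m j : R) • L j = ∑ i, L (m i) := by
    simp only [Nat.cast_smul_eq_nsmul, sum_comp_eq_sum_fiberCard_smul]
  funext j
  exact_mod_cast hL.eq_of_sum_eq_sum ((hcard m).trans (hcard m').symm)
    ((hsmul m).trans (h.trans (hsmul m').symm)) j (mem_univ j)

def equalSumPairs [Fintype ι] {M : Type*} [AddCommMonoid M] [DecidableEq M] (L : ι → M) (k : ℕ) :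
    Finset ((Fin k → ι) × (Fin k → ι)) :=
  {p | ∑ i, L (p.1 i) = ∑ i, L (p.2 i)}

lemma AffineIndependent.card_pow_le_mul_card_equalSumPairs [Fintype ι] {R V : Type*} [Ring R]
    [CharZero R] [AddCommGroup V] [Module R V] [DecidableEq V] {L : ι → V}
    (hL : AffineIndependent R L) (k : ℕ) :
    Fintype.card ι ^ (2 * k) ≤ (k + 1) ^ Fintype.card ι * #(equalSumPairs L k) := by
  have hrange (m : Fin k → ι) : fiberCard m ∈ Fintype.piFinset fun _ => range (k + 1) :=
    Fintype.mem_piFinset.2 fun j =>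
      mem_range.2 (Nat.lt_succ_of_le ((fiberCard_le m j).trans_eq (Fintype.card_fin k)))
  have h := sq_card_le_card_mul_card_filter_eq fiberCard _ hrange
  rw [Fintype.card_fun, Fintype.card_fin, ← pow_mul, mul_comm, Fintype.card_piFinset, prod_const,
    card_range, card_univ] at h
  convert h using 3
  exact filter_congr fun p _ => ⟨hL.fiberCard_eq_of_sum_eq, sum_comp_eq_of_fiberCard_eq L⟩

end FiberCard

section Bohr

variable {ι : Type*} [Fintype ι]

lemma tendsto_mean_normSq_sum_exp_pow (L K : ι → ℝ) (k : ℕ)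
    (hLK : ∀ m m' : Fin k → ι, ∑ i, L (m i) = ∑ i, L (m' i) → ∑ i, K (m i) = ∑ i, K (m' i)) :
    Tendsto (fun T : ℝ => T⁻¹ * ∫ t in (0 : ℝ)..T, normSq (∑ j, exp (↑(L j * t - K j) * I)) ^ k)
      atTop (𝓝 #(equalSumPairs L k)) := by
  set μ : (Fin k → ι) × (Fin k → ι) → ℝ := fun p => ∑ i, L (p.1 i) - ∑ i, L (p.2 i)
  set c : (Fin k → ι) × (Fin k → ι) → ℝ := fun p => ∑ i, K (p.1 i) - ∑ i, K (p.2 i)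
  have hexpand (t : ℝ) : (normSq (∑ j, exp (↑(L j * t - K j) * I)) : ℂ) ^ k =
      ∑ p, exp (↑(μ p * t - c p) * I) := by
    rw [normSq_sum_exp_ofReal_mul_I_pow]
    refine Fintype.sum_congr _ _ fun p => ?_
    congr 3
    simp only [μ, c, sum_sub_distrib, ← sum_mul]
    ring
  have hmean := tendsto_mean_sum_exp_ofReal_mul_I (μ := μ) (c := c)
    fun p hp => sub_eq_zero.2 (hLK p.1 p.2 (sub_eq_zero.1 hp))
  have hcount : #{p | μ p = 0} = #(equalSumPairs L k) := by
    simp only [μ, sub_eq_zero, equalSumPairs]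
  rw [hcount] at hmean
  rw [← tendsto_ofReal_iff]
  refine hmean.congr fun T => ?_
  rw [ofReal_mul, ofReal_inv, ← intervalIntegral.integral_ofReal]
  simp_rw [ofReal_pow, hexpand]

lemma exists_add_one_pow_mul_pow_lt_one (d : ℕ) {r : ℝ} (hr0 : 0 < r) (hr1 : r < 1) :
    ∃ k : ℕ, ((k : ℝ) + 1) ^ d * r ^ k < 1 := by
  have h := ((tendsto_pow_const_mul_const_pow_of_lt_one d hr0.le hr1).comp
    (tendsto_add_atTop_nat 1)).const_mul r⁻¹
  rw [mul_zero] at h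
  obtain ⟨k, hk⟩ := (h.eventually (gt_mem_nhds one_pos)).exists
  refine ⟨k, lt_of_eq_of_lt ?_ hk⟩
  simp only [Function.comp_apply, Nat.cast_add, Nat.cast_one, pow_succ]
  field_simp

theorem AffineIndependent.exists_lt_normSq_sum_exp {L : ι → ℝ} (hL : AffineIndependent ℚ L)
    (K : ι → ℝ) {b : ℝ} (hb : b < Fintype.card ι ^ 2) :
    ∃ t, b < normSq (∑ j, exp (↑(L j * t - K j) * I)) := by
  classical
  by_cases hb0 : b < 0
  · exact ⟨0, hb0.trans_le (normSq_nonneg _)⟩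
  set N := Fintype.card ι
  obtain ⟨b', hbb', hb'N⟩ := exists_between hb
  have hb'0 : 0 < b' := by linarith
  have hN : (0 : ℝ) < N ^ 2 := hb'0.trans hb'N
  obtain ⟨k, hk⟩ := exists_add_one_pow_mul_pow_lt_one N (div_pos hb'0 hN) ((div_lt_one hN).2 hb'N)
  rw [div_pow, ← mul_div_assoc, div_lt_one (pow_pos hN k), ← pow_mul] at hk
  have hcount : (N : ℝ) ^ (2 * k) ≤ (k + 1) ^ N * #(equalSumPairs L k) := by
    exact_mod_cast hL.card_pow_le_mul_card_equalSumPairs k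
  have hlt : b' ^ k < #(equalSumPairs L k) :=
    lt_of_mul_lt_mul_left (hk.trans_le hcount) (by positivity)
  obtain ⟨t, ht⟩ := exists_lt_of_lt_tendsto_mean (by fun_prop)
    (tendsto_mean_normSq_sum_exp_pow L K k fun m m' h =>
      sum_comp_eq_of_fiberCard_eq K (hL.fiberCard_eq_of_sum_eq h)) hlt
  exact ⟨t, hbb'.trans (lt_of_pow_lt_pow_left₀ k (normSq_nonneg _) ht)⟩

end Bohr

lemma one_sub_re_mul_conj_le_card_sq_sub_normSq {ι : Type*} [Fintype ι] {z : ι → ℂ}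
    (hz : ∀ i, ‖z i‖ = 1) (i j : ι) :
    1 - (z i * conj (z j)).re ≤ Fintype.card ι ^ 2 - normSq (∑ i, z i) := by
  have hterm (i j : ι) : 0 ≤ 1 - (z i * conj (z j)).re := by
    have := re_le_norm (z i * conj (z j))
    rw [norm_mul, RCLike.norm_conj, hz, hz, one_mul] at this
    linarith
  have hsum : (Fintype.card ι : ℝ) ^ 2 - normSq (∑ i, z i) =
      ∑ i, ∑ j, (1 - (z i * conj (z j)).re) := by
    rw [← ofReal_re (normSq _), ← mul_conj, map_sum, sum_mul_sum]
    simp only [re_sum, sum_sub_distrib, sum_const, card_univ, nsmul_eq_mul, mul_one, sq]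
  rw [hsum]
  calc 1 - (z i * conj (z j)).re ≤ ∑ j', (1 - (z i * conj (z j')).re) :=
        single_le_sum (fun j' _ => hterm i j') (mem_univ j)
    _ ≤ ∑ i', ∑ j', (1 - (z i' * conj (z j')).re) :=
        single_le_sum (f := fun i' => ∑ j', (1 - (z i' * conj (z j')).re))
          (fun i' _ => sum_nonneg fun j' _ => hterm i' j') (mem_univ i)

lemma exists_int_sq_sub_two_pi_mul_le (θ : ℝ) :
    ∃ k : ℤ, (θ - 2 * π * k) ^ 2 ≤ π ^ 2 / 2 * (1 - Real.cos θ) := by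
  set k := round (θ / (2 * π))
  refine ⟨k, ?_⟩
  have hφ : |θ - 2 * π * k| ≤ π := by
    rw [show θ - 2 * π * k = 2 * π * (θ / (2 * π) - k) by field_simp, abs_mul,
      abs_of_pos Real.two_pi_pos]
    nlinarith [abs_sub_round (θ / (2 * π)), Real.pi_pos]
  have hcos : Real.cos (θ - 2 * π * k) = Real.cos θ := by
    rw [mul_comm, Real.cos_sub_int_mul_two_pi]
  have hbound := Real.cos_le_one_sub_mul_cos_sq hφ
  rw [hcos] at hbound
  calc (θ - 2 * π * k) ^ 2 = π ^ 2 / 2 * (2 / π ^ 2 * (θ - 2 * π * k) ^ 2) := by field_simp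
    _ ≤ π ^ 2 / 2 * (1 - Real.cos θ) := by gcongr; linarith

lemma affineIndependent_cons_zero {R V : Type*} [Ring R] [AddCommGroup V] [Module R V] {n : ℕ}
    {v : Fin n → V} (hv : LinearIndependent R v) :
    AffineIndependent R (Fin.cons 0 v : Fin (n + 1) → V) := by
  rw [affineIndependent_iff_linearIndependent_vsub R _ 0,
    ← linearIndependent_equiv (finSuccAboveEquiv 0)]
  convert hv
  ext i
  simp [finSuccAboveEquiv_apply]

/-- Kronecker's theorem: if λ_1, …, λ_n are rationally independent, then for any
κ_1, …, κ_n and ε > 0 there is t ∈ ℝ with dist(λ_j t - κ_j, 2πℤ) < ε for every j. -/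
theorem kronecker (n : ℕ) (lam : Fin n → ℝ) (hlam : LinearIndependent ℚ lam)
    (κ : Fin n → ℝ) (ε : ℝ) (hε : 0 < ε) :
    ∃ t : ℝ, ∀ j, ∃ k : ℤ, |lam j * t - κ j - 2 * Real.pi * k| < ε := by
  set L : Fin (n + 1) → ℝ := Fin.cons 0 lam
  set K : Fin (n + 1) → ℝ := Fin.cons 0 κ
  have hη : 0 < 2 * ε ^ 2 / π ^ 2 := by positivity
  obtain ⟨t, ht⟩ := (affineIndependent_cons_zero hlam).exists_lt_normSq_sum_exp K
    (b := (n + 1) ^ 2 - 2 * ε ^ 2 / π ^ 2) (by simpa using hη)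
  refine ⟨t, fun j => ?_⟩
  have hcos := one_sub_re_mul_conj_le_card_sq_sub_normSq
    (z := fun i => exp (↑(L i * t - K i) * I)) (fun _ => norm_exp_ofReal_mul_I _) j.succ 0
  simp only [L, K, Fin.cons_succ, Fin.cons_zero, zero_mul, sub_zero, ofReal_zero, exp_zero,
    map_one, mul_one, exp_ofReal_mul_I_re, Fintype.card_fin, Nat.cast_add, Nat.cast_one] at hcos
  obtain ⟨k, hk⟩ := exists_int_sq_sub_two_pi_mul_le (lam j * t - κ j)
  refine ⟨k, abs_lt_of_sq_lt_sq ?_ hε.le⟩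
  calc (lam j * t - κ j - 2 * π * k) ^ 2 ≤ π ^ 2 / 2 * (1 - Real.cos (lam j * t - κ j)) := hk
    _ < π ^ 2 / 2 * (2 * ε ^ 2 / π ^ 2) := by gcongr; linarith
    _ = ε ^ 2 := by field_simp
end

section
/- For the trigonometric polynomial f(t) = Σ_{j=1}^n A_j e^{iλ_j t} with A_j ≠ 0 and rationally independent λ_j, the supremum sup_{t∈ℝ} |Σ_{j=1}^n A_j e^{iλ_j t}(e^{ix_j} - e^{iy_j})| equals Σ_{j=1}^n |A_j| · |e^{ix_j} - e^{iy_j}| for any real x_j, y_j. -/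
open Filter Topology Complex Finset intervalIntegral

/-!
Put `B_j = A_j (e^{i x_j} - e^{i y_j})`, `f t = ∑ B_j e^{i λ_j t}` and `S = ∑ ‖B_j‖`; the bound
`‖f‖ ≤ S` is the triangle inequality.
For the converse, weight `f` by the nonnegative function
`q t = ∏_i ‖∑_{a < N} e^{i a (λ_i t + arg B_i)}‖²`, a product of Fejér kernels. Expanded, `f q`
and `q` are finite sums of exponentials `e^{i μ t}` whose frequencies `μ` are integer
combinations of the `λ_i`, and by rational independence only the constant terms survive
averaging over `[0, T]` as `T → ∞`. Reading them off gives mean `q = N ^ n` and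
mean `f q = (N - 1) N ^ (n - 1) S`, so `sup ‖f‖ ≥ (1 - 1/N) S` for every `N`: a quantitative
form of Kronecker's theorem.
-/

def HasMeanValue (f : ℝ → ℂ) (c : ℂ) : Prop :=
  Tendsto (fun T ↦ ⨍ t in 0..T, f t) atTop (𝓝 c)

lemma hasMeanValue_iff {f : ℝ → ℂ} {c : ℂ} :
    HasMeanValue f c ↔ Tendsto (fun T : ℝ ↦ T⁻¹ • ∫ t in 0..T, f t) atTop (𝓝 c) := by
  simp only [HasMeanValue, interval_average_eq, sub_zero]

namespace HasMeanValue

variable {f : ℝ → ℂ} {c : ℂ}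

lemma const_mul (hf : HasMeanValue f c) (b : ℂ) : HasMeanValue (fun t ↦ b * f t) (b * c) := by
  rw [hasMeanValue_iff] at *
  simpa only [integral_const_mul, mul_smul_comm] using hf.const_mul b

lemma sum {κ : Type*} {s : Finset κ} {f : κ → ℝ → ℂ} {c : κ → ℂ}
    (hf : ∀ k ∈ s, Continuous (f k)) (h : ∀ k ∈ s, HasMeanValue (f k) (c k)) :
    HasMeanValue (fun t ↦ ∑ k ∈ s, f k t) (∑ k ∈ s, c k) := by
  simp only [hasMeanValue_iff] at *
  have hintegrable : ∀ T : ℝ, ∀ k ∈ s, IntervalIntegrable (f k) MeasureTheory.volume 0 T :=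
    fun T k hk ↦ (hf k hk).intervalIntegrable 0 T
  refine (tendsto_finsetSum s h).congr fun T ↦ ?_
  rw [integral_finsetSum (hintegrable T), Finset.smul_sum]

lemma norm_le_mul {q : ℝ → ℝ} {b : ℂ} {M : ℝ} (hf : HasMeanValue f c)
    (hq : HasMeanValue (fun t ↦ (q t : ℂ)) b) (hq_cont : Continuous q) (hq_nonneg : ∀ t, 0 ≤ q t)
    (hfq : ∀ t, ‖f t‖ ≤ M * q t) : ‖c‖ ≤ M * ‖b‖ := by
  rw [hasMeanValue_iff] at hf hq
  refine le_of_tendsto_of_tendsto hf.norm (hq.norm.const_mul M) ?_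
  filter_upwards [eventually_gt_atTop 0] with T hT
  have hqT : 0 ≤ ∫ t in 0..T, q t := integral_nonneg hT.le fun t _ ↦ hq_nonneg t
  have hfT : ‖∫ t in 0..T, f t‖ ≤ M * ∫ t in 0..T, q t := by
    rw [← integral_const_mul]
    exact norm_integral_le_of_norm_le hT.le (.of_forall fun t _ ↦ hfq t)
      ((hq_cont.const_mul M).intervalIntegrable 0 T)
  rw [integral_ofReal, norm_smul, norm_smul, norm_real, Real.norm_of_nonneg hqT,
    Real.norm_of_nonneg (inv_nonneg.2 hT.le)]
  calc T⁻¹ * ‖∫ t in 0..T, f t‖ ≤ T⁻¹ * (M * ∫ t in 0..T, q t) := by gcongr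
    _ = M * (T⁻¹ * ∫ t in 0..T, q t) := by ring

end HasMeanValue

lemma hasMeanValue_cexp (μ : ℝ) :
    HasMeanValue (fun t ↦ cexp (μ * t * I)) (if μ = 0 then 1 else 0) := by
  rw [hasMeanValue_iff]
  split_ifs with hμ
  · refine tendsto_const_nhds.congr' ?_
    filter_upwards [eventually_ne_atTop 0] with T hT
    simp [hμ, hT]
  · have hc : (μ : ℂ) * I ≠ 0 := by simp [hμ]
    have hintegral : ∀ T : ℝ, ∫ t in 0..T, cexp (μ * t * I) = (cexp (μ * I * T) - 1) / (μ * I) := by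
      intro T
      simp_rw [mul_right_comm _ _ I]
      rw [integral_exp_mul_complex hc]
      simp
    refine squeeze_zero_norm' (a := fun T ↦ T⁻¹ * (2 / ‖(μ : ℂ) * I‖)) ?_ ?_
    · filter_upwards [eventually_gt_atTop 0] with T hT
      rw [hintegral, norm_smul, Real.norm_of_nonneg (inv_nonneg.2 hT.le), norm_div]
      gcongr
      calc ‖cexp (μ * I * T) - 1‖ ≤ ‖cexp (μ * I * T)‖ + ‖(1 : ℂ)‖ := norm_sub_le _ _
        _ = 2 := by
          rw [mul_right_comm, ← ofReal_mul, norm_exp_ofReal_mul_I, norm_one]; norm_num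
    · simpa using tendsto_inv_atTop_zero.mul_const (2 / ‖(μ : ℂ) * I‖)

lemma hasMeanValue_sum_cexp {κ : Type*} (s : Finset κ) (c : κ → ℂ) (μ : κ → ℝ) :
    HasMeanValue (fun t ↦ ∑ k ∈ s, c k * cexp (μ k * t * I))
      (∑ k ∈ s, if μ k = 0 then c k else 0) := by
  convert HasMeanValue.sum (fun k _ ↦ by fun_prop) fun k _ ↦
    (hasMeanValue_cexp (μ k)).const_mul (c k) using 2
  simp

lemma card_filter_add_eq_range_product (N k : ℕ) :
    #{p ∈ range N ×ˢ range N | p.1 + k = p.2} = N - k := by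
  rw [← card_range (N - k)]
  refine card_nbij' Prod.fst (fun a ↦ (a, a + k)) ?_ ?_ ?_ ?_ <;> intro p <;>
    simp [Prod.ext_iff] <;> omega

/-- `N` times the Fejér kernel; its `m`-th Fourier coefficient is `N - |m|` for `|m| < N`. -/
noncomputable def fejerWeight (N : ℕ) (φ : ℝ) : ℝ := ‖∑ a ∈ range N, cexp (a * φ * I)‖ ^ 2

@[fun_prop]
lemma continuous_fejerWeight (N : ℕ) : Continuous (fejerWeight N) := by
  unfold fejerWeight; fun_prop

lemma fejerWeight_nonneg (N : ℕ) (φ : ℝ) : 0 ≤ fejerWeight N φ := sq_nonneg _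

lemma ofReal_fejerWeight (N : ℕ) (φ : ℝ) :
    (fejerWeight N φ : ℂ) = ∑ p ∈ range N ×ˢ range N, cexp ((p.1 - p.2 : ℝ) * φ * I) := by
  rw [fejerWeight, ofReal_pow, ← mul_conj', map_sum, sum_mul_sum, sum_product]
  refine sum_congr rfl fun a _ ↦ sum_congr rfl fun b _ ↦ ?_
  rw [← exp_conj, ← exp_add]
  congr 1
  simp only [map_mul, map_natCast, conj_ofReal, conj_I]
  push_cast; ring

lemma cexp_mul_fejerWeight_eq_sum (N k : ℕ) (v θ t : ℝ) :
    cexp ((k * v : ℝ) * t * I) * fejerWeight N (v * t + θ) =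
      ∑ p ∈ range N ×ˢ range N, cexp ((p.1 - p.2 : ℝ) * θ * I) *
        cexp (((p.1 + k - p.2) * v : ℝ) * t * I) := by
  rw [ofReal_fejerWeight, mul_sum]
  refine sum_congr rfl fun p _ ↦ ?_
  rw [← exp_add, ← exp_add]
  congr 1
  push_cast; ring

lemma le_of_forall_natCast_sub_one_mul_le {S M : ℝ} (h : ∀ N : ℕ, 0 < N → (N - 1) * S ≤ N * M) :
    S ≤ M := by
  by_contra! hMS
  obtain ⟨N, hN⟩ := exists_nat_gt (S / (S - M))
  have := h (N + 1) N.succ_pos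
  rw [div_lt_iff₀ (sub_pos.2 hMS)] at hN
  push_cast at this
  nlinarith

lemma mul_cexp_neg_arg_mul_I (z : ℂ) : z * cexp (-(z.arg : ℝ) * I) = ‖z‖ := by
  nth_rewrite 1 [← norm_mul_exp_arg_mul_I z]
  rw [mul_assoc, ← exp_add, neg_mul, add_neg_cancel, exp_zero, mul_one]

section

variable {ι : Type*} [Fintype ι]

lemma LinearIndependent.eq_zero_of_sum_intCast_mul_eq_zero {v : ι → ℝ}
    (hv : LinearIndependent ℚ v) {z : ι → ℤ} (hz : ∑ i, (z i : ℝ) * v i = 0) : z = 0 := by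
  have := Fintype.linearIndependent_iff.1 (hv.restrict_scalars' ℤ) z
  exact funext (this (by simpa [zsmul_eq_mul] using hz))

lemma sum_natCast_mul_eq_zero_iff {v : ι → ℝ} (hv : LinearIndependent ℚ v) (k : ι → ℕ)
    (d : ι → ℕ × ℕ) :
    ∑ i, ((d i).1 + k i - (d i).2 : ℝ) * v i = 0 ↔ ∀ i, (d i).1 + k i = (d i).2 := by
  refine ⟨fun h i ↦ ?_, fun h ↦ sum_eq_zero fun i _ ↦ by simp [← h i]⟩
  have := congr_fun (hv.eq_zero_of_sum_intCast_mul_eq_zero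
    (z := fun i ↦ (d i).1 + k i - (d i).2) (by push_cast; exact h)) i
  simp only [Pi.zero_apply] at this
  omega

lemma cexp_mul_prod_fejerWeight_eq_sum [DecidableEq ι] (N : ℕ) (k : ι → ℕ) (v θ : ι → ℝ)
    (t : ℝ) :
    cexp ((∑ i, k i * v i : ℝ) * t * I) * ∏ i, (fejerWeight N (v i * t + θ i) : ℂ) =
      ∑ d ∈ Fintype.piFinset fun _ ↦ range N ×ˢ range N,
        (∏ i, cexp (((d i).1 - (d i).2 : ℝ) * θ i * I)) *
          cexp ((∑ i, ((d i).1 + k i - (d i).2 : ℝ) * v i : ℝ) * t * I) := by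
  have hexp (w : ι → ℝ) : cexp ((∑ i, w i : ℝ) * t * I) = ∏ i, cexp (w i * t * I) := by
    rw [← exp_sum]; push_cast; rw [sum_mul, sum_mul]
  simp_rw [hexp, ← prod_mul_distrib, cexp_mul_fejerWeight_eq_sum, prod_univ_sum]

lemma hasMeanValue_cexp_mul_prod_fejerWeight [DecidableEq ι] {v : ι → ℝ}
    (hv : LinearIndependent ℚ v) (N : ℕ) (k : ι → ℕ) (θ : ι → ℝ) :
    HasMeanValue (fun t ↦ cexp ((∑ i, k i * v i : ℝ) * t * I) *
        ∏ i, (fejerWeight N (v i * t + θ i) : ℂ))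
      (∏ i, (N - k i : ℕ) * cexp (-(k i * θ i : ℝ) * I)) := by
  have hterm (d : ι → ℕ × ℕ) :
      (if ∑ i, ((d i).1 + k i - (d i).2 : ℝ) * v i = 0 then
        ∏ i, cexp (((d i).1 - (d i).2 : ℝ) * θ i * I) else 0) =
      ∏ i, if (d i).1 + k i = (d i).2 then cexp (-(k i * θ i : ℝ) * I) else 0 := by
    simp only [sum_natCast_mul_eq_zero_iff hv]
    split_ifs with hd
    · refine prod_congr rfl fun i _ ↦ ?_
      rw [if_pos (hd i), ← hd i]
      congr 1; push_cast; ring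
    · obtain ⟨i, hi⟩ := not_forall.1 hd
      exact (prod_eq_zero (mem_univ i) (if_neg hi)).symm
  have hcount (k : ℕ) (z : ℂ) :
      ∑ p ∈ range N ×ˢ range N, (if p.1 + k = p.2 then z else 0) = (N - k : ℕ) * z := by
    rw [← sum_filter, sum_const, card_filter_add_eq_range_product, nsmul_eq_mul]
  rw [funext (cexp_mul_prod_fejerWeight_eq_sum N k v θ)]
  convert hasMeanValue_sum_cexp _ _ _ using 1
  rw [sum_congr rfl fun d _ ↦ hterm d, ← prod_univ_sum (fun _ ↦ range N ×ˢ range N)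
    fun i p ↦ if p.1 + k i = p.2 then cexp (-(k i * θ i : ℝ) * I) else 0]
  simp_rw [hcount]

lemma natCast_sub_one_mul_sum_norm_le [DecidableEq ι] [Nonempty ι] {v : ι → ℝ}
    (hv : LinearIndependent ℚ v) (B : ι → ℂ) {M : ℝ}
    (hM : ∀ t : ℝ, ‖∑ i, B i * cexp (v i * t * I)‖ ≤ M) {N : ℕ} (hN : 0 < N) :
    (N - 1) * ∑ i, ‖B i‖ ≤ N * M := by
  set q : ℝ → ℝ := fun t ↦ ∏ i, fejerWeight N (v i * t + (B i).arg)
  have hq_cont : Continuous q := by fun_prop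
  have hq_nonneg (t : ℝ) : 0 ≤ q t := prod_nonneg fun i _ ↦ fejerWeight_nonneg N _
  have hq_mean : HasMeanValue (fun t ↦ (q t : ℂ)) (N ^ Fintype.card ι) := by
    simpa [q] using hasMeanValue_cexp_mul_prod_fejerWeight hv N 0 (fun i ↦ (B i).arg)
  have hshift (j : ι) : HasMeanValue (fun t ↦ cexp (v j * t * I) * q t)
      ((N - 1) * N ^ (Fintype.card ι - 1) * cexp (-(B j).arg * I)) := by
    have := hasMeanValue_cexp_mul_prod_fejerWeight hv N (Pi.single j 1) (fun i ↦ (B i).arg)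
    rw [Fintype.prod_eq_mul_prod_compl j, prod_congr rfl (g := fun _ ↦ (N : ℂ)) fun i hi ↦ by
      simp [Pi.single_eq_of_ne (mem_compl.1 hi ∘ mem_singleton.2)], prod_const, card_compl,
      card_singleton, Pi.single_eq_same, Nat.cast_sub hN] at this
    convert this using 1
    · simp [q, Pi.single_apply]
    · push_cast [one_mul]; ring
  have hfq_mean : HasMeanValue (fun t ↦ (∑ i, B i * cexp (v i * t * I)) * q t)
      (((N - 1) * N ^ (Fintype.card ι - 1) * ∑ i, ‖B i‖ : ℝ) : ℂ) := by
    convert HasMeanValue.sum (s := univ) (fun i _ ↦ by fun_prop) fun i _ ↦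
      (hshift i).const_mul (B i) using 1
    · simp_rw [sum_mul, mul_assoc]
    · push_cast
      rw [mul_sum]
      refine sum_congr rfl fun i _ ↦ ?_
      rw [← mul_cexp_neg_arg_mul_I]
      ring
  have hbound := hfq_mean.norm_le_mul (M := M) hq_mean hq_cont hq_nonneg fun t ↦ ?_
  · have hN1 : (1 : ℝ) ≤ N := by exact_mod_cast hN
    rw [norm_real, Real.norm_of_nonneg (by positivity), norm_pow, Complex.norm_natCast,
      ← mul_pow_sub_one Fintype.card_ne_zero] at hbound
    have hpow : (0 : ℝ) < N ^ (Fintype.card ι - 1) := by positivity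
    nlinarith
  · rw [norm_mul, norm_real, Real.norm_of_nonneg (hq_nonneg t)]
    exact mul_le_mul_of_nonneg_right (hM t) (hq_nonneg t)

theorem iSup_norm_sum_mul_cexp {v : ι → ℝ} (hv : LinearIndependent ℚ v) (B : ι → ℂ) :
    ⨆ t : ℝ, ‖∑ i, B i * cexp (v i * t * I)‖ = ∑ i, ‖B i‖ := by
  classical
  have hle (t : ℝ) : ‖∑ i, B i * cexp (v i * t * I)‖ ≤ ∑ i, ‖B i‖ :=
    (norm_sum_le _ _).trans_eq <| by simp only [norm_mul, ← ofReal_mul,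
      norm_exp_ofReal_mul_I, mul_one]
  refine le_antisymm (ciSup_le hle) ?_
  rcases isEmpty_or_nonempty ι with hι | hι
  · simp
  · exact le_of_forall_natCast_sub_one_mul_le fun N hN ↦
      natCast_sub_one_mul_sum_norm_le hv B (le_ciSup ⟨_, Set.forall_mem_range.2 hle⟩) hN

end

theorem sup_trig_poly_eq_sum_general (n : ℕ) (A : Fin n → ℂ)
    (lam : Fin n → ℝ) (hlam : LinearIndependent ℚ lam) (x y : Fin n → ℝ) :
    (⨆ t : ℝ, ‖∑ j, A j * Complex.exp (Complex.I * ((lam j * t : ℝ) : ℂ)) *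
        (Complex.exp (Complex.I * (x j : ℂ)) - Complex.exp (Complex.I * (y j : ℂ)))‖) =
      ∑ j, ‖A j‖ *
        ‖Complex.exp (Complex.I * (x j : ℂ)) - Complex.exp (Complex.I * (y j : ℂ))‖ := by
  simp_rw [← norm_mul]
  convert iSup_norm_sum_mul_cexp hlam fun j ↦ A j * (cexp (I * x j) - cexp (I * y j)) using 5
  rw [ofReal_mul, mul_comm I]
  ring

/-- for rationally independent exponents,
sup_t |Σ A_j e^{iλ_j t}(e^{ix_j} - e^{iy_j})| = Σ |A_j| |e^{ix_j} - e^{iy_j}|. -/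
theorem sup_trig_poly_eq_sum (n : ℕ) (A : Fin n → ℂ) (hA : ∀ j, A j ≠ 0)
    (lam : Fin n → ℝ) (hlam : LinearIndependent ℚ lam) (x y : Fin n → ℝ) :
    (⨆ t : ℝ, ‖∑ j, A j * Complex.exp (Complex.I * ((lam j * t : ℝ) : ℂ)) *
        (Complex.exp (Complex.I * (x j : ℂ)) - Complex.exp (Complex.I * (y j : ℂ)))‖) =
      ∑ j, ‖A j‖ *
        ‖Complex.exp (Complex.I * (x j : ℂ)) - Complex.exp (Complex.I * (y j : ℂ))‖ :=
  sup_trig_poly_eq_sum_general n A lam hlam x y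
end

section
/- Let f be almost periodic, uniformly continuous with modulus δ (|s - t| ≤ δ(ε) ⟹ |f(s) - f(t)| ≤ ε), and let L(ε) be an inclusion length of Ω_ε(f). Then the hull H(f) can be covered by at most 2L(ε/2)/δ(ε/2) + 1 balls of radius 2ε in the sup norm; hence N_{2ε}(H(f)) ≤ 2L(ε/2)/δ(ε/2) + 1. -/
/-- The s-translate f_s of a bounded continuous function, f_s(t) = f(t+s). -/
noncomputable def translateBCF (f : BoundedContinuousFunction ℝ ℂ) (s : ℝ) :
    BoundedContinuousFunction ℝ ℂ :=
  f.compContinuous ⟨fun t => t + s, by continuity⟩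

/-- The hull of f: the sup-norm closure of the set of translates of f. -/
noncomputable def hull (f : BoundedContinuousFunction ℝ ℂ) :
    Set (BoundedContinuousFunction ℝ ℂ) :=
  closure (Set.range (translateBCF f))

lemma translateBCF_apply (f : BoundedContinuousFunction ℝ ℂ) (s t : ℝ) :
    translateBCF f s t = f (t + s) := rfl

/-- the hull of f can be covered by at most 2L(ε/2)/δ(ε/2) + 1 balls of
radius 2ε, where δ is a modulus of uniform continuity of f and L an inclusion length
for the ε-almost periods. -/
theorem hull_cover_card_le (f : BoundedContinuousFunction ℝ ℂ) (L δ : ℝ → ℝ)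
    (hδpos : ∀ ε > (0 : ℝ), 0 < δ ε)
    (hδ : ∀ ε > (0 : ℝ), ∀ s t : ℝ, |s - t| ≤ δ ε → ‖f s - f t‖ ≤ ε)
    (hL : ∀ ε > (0 : ℝ), ∀ a : ℝ, ∃ τ ∈ Set.Icc a (a + L ε), dist (translateBCF f τ) f < ε)
    (ε : ℝ) (hε : 0 < ε) :
    ∃ s : Finset (BoundedContinuousFunction ℝ ℂ),
      (s.card : ℝ) ≤ 2 * L (ε / 2) / δ (ε / 2) + 1 ∧
      ∀ g ∈ hull f, ∃ c ∈ s, dist g c ≤ 2 * ε := by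
  classical
  have hε2 : (0:ℝ) < ε/2 := by linarith
  set δ' := δ (ε/2) with hδ'def
  set L' := L (ε/2) with hL'def
  have hδp : 0 < δ' := hδpos _ hε2
  have hL0 : 0 ≤ L' := by
    obtain ⟨τ, hτ, _⟩ := hL (ε/2) hε2 0
    simp only [Set.mem_Icc, zero_add] at hτ
    linarith [hτ.1, hτ.2]
  set N := ⌊L'/δ'⌋₊ with hN
  set S : Finset (BoundedContinuousFunction ℝ ℂ) :=
    (Finset.range (N+1)).image (fun k : ℕ => translateBCF f (k*δ')) with hS
  -- key: every translate is within ε of some grid translate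
  have key : ∀ s : ℝ, ∃ c ∈ S, dist (translateBCF f s) c < ε := by
    intro s
    obtain ⟨τ, hτ, hτd⟩ := hL (ε/2) hε2 (s - L')
    simp only [Set.mem_Icc] at hτ
    have hτ2 : τ ≤ s := by linarith [hτ.2]
    set u := s - τ with hu
    have hu0 : 0 ≤ u := by linarith
    have huL : u ≤ L' := by linarith [hτ.1]
    set k := ⌊u/δ'⌋₊ with hk
    have hdiv : u/δ' ≤ L'/δ' := by gcongr
    have hkN : k ≤ N := Nat.floor_le_floor hdiv
    refine ⟨translateBCF f (k*δ'), Finset.mem_image_of_mem _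
      (Finset.mem_range.mpr (Nat.lt_succ_of_le hkN)), ?_⟩
    have d1 : dist (translateBCF f s) (translateBCF f u) < ε/2 := by
      have hle : dist (translateBCF f s) (translateBCF f u) ≤ dist (translateBCF f τ) f := by
        rw [BoundedContinuousFunction.dist_le dist_nonneg]
        intro t
        have := BoundedContinuousFunction.dist_coe_le_dist (f := translateBCF f τ) (g := f) (t + u)
        simpa [translateBCF_apply, show t + u + τ = t + s by rw [hu]; ring] using this
      linarith
    have d2 : dist (translateBCF f u) (translateBCF f (k*δ')) ≤ ε/2 := by
      rw [BoundedContinuousFunction.dist_le hε2.le]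
      intro t
      rw [translateBCF_apply, translateBCF_apply, dist_eq_norm]
      apply hδ (ε/2) hε2
      have h1 : (k:ℝ)*δ' ≤ u := by
        have := Nat.floor_le (div_nonneg hu0 hδp.le)
        calc (k:ℝ)*δ' ≤ (u/δ')*δ' := by gcongr
          _ = u := by field_simp
      have h2 : u < ((k:ℝ)+1)*δ' := by
        have := Nat.lt_floor_add_one (u/δ')
        calc u = (u/δ')*δ' := by field_simp
          _ < ((k:ℝ)+1)*δ' := by gcongr
      rw [abs_le]
      constructor <;> nlinarith
    calc dist (translateBCF f s) (translateBCF f (k*δ'))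
        ≤ dist (translateBCF f s) (translateBCF f u)
          + dist (translateBCF f u) (translateBCF f (k*δ')) := dist_triangle _ _ _
      _ < ε := by linarith
  refine ⟨S, ?_, ?_⟩
  · have hcard : S.card ≤ N+1 := by
      rw [hS]; exact le_trans Finset.card_image_le (by simp)
    calc (S.card : ℝ)
        ≤ (N : ℝ) + 1 := by exact_mod_cast hcard
      _ ≤ L'/δ' + 1 := by
          have := Nat.floor_le (div_nonneg hL0 hδp.le)
          linarith
      _ ≤ 2*L'/δ' + 1 := by
          have : L'/δ' ≤ 2*L'/δ' := by gcongr; linarith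
          linarith
  · intro g hg
    rw [hull, Metric.mem_closure_iff] at hg
    obtain ⟨b, hb, hgb⟩ := hg ε hε
    obtain ⟨s, rfl⟩ := hb
    obtain ⟨c, hc, hsc⟩ := key s
    exact ⟨c, hc, by linarith [dist_triangle g (translateBCF f s) c]⟩
end

section
/- Let f(t) = Σ_{j=1}^n A_j e^{iλ_j t} with A_j ≠ 0 and λ_j rationally independent. Then f is Lipschitz, and for every γ > 0 there exists ε₀ > 0 such that every inclusion length L(ε) of the set of ε-almost periods of f satisfies L(ε) ≥ (1/ε)^{n-1-γ} for all ε ∈ (0, ε₀). -/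
/-!
An `ε`-almost period `τ` of `f = ∑ A_j e^{iλ_j t}` changes each term `A_j e^{iλ_j t}` by less
than `ε`, because coefficients of a trigonometric polynomial are recovered as mean values; so
`λτ` lies within `O(ε)` of `0` on the torus `𝕋ⁿ = (ℝ/2πℤ)ⁿ`. By Kronecker's theorem the line
`t ↦ λt` is dense in `𝕋ⁿ`, so if every window of length `L` contains an almost period, the points
`λ(ih)`, `0 ≤ i ≤ L/h`, with a step `h ≍ ε`, form an `O(ε)`-net of `𝕋ⁿ`. Such a net has
`≳ ε^{-n}` points, whence `L ≳ ε^{1-n}`.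

Kronecker's theorem is Bohr's argument: if the line stayed `δ`-far from a point `x`, then
`F(t) = 1 + ∑ e^{i(λ_j t - x_j)}` would satisfy `|F| ≤ n + 1 - η`, while the mean of `|F|^{2k}` is
at least `(n + 1)^{2k} / (k + 1)^{n+1}`.
-/

open Complex Filter Topology Finset
open scoped Real ComplexConjugate

local notation "𝕋" => AddCircle (2 * π)

theorem norm_exp_I_mul_sub_exp_I_mul_le (a b : ℝ) :
    ‖exp (I * a) - exp (I * b)‖ ≤ |a - b| := by
  have : exp (I * a) - exp (I * b) = exp (I * b) * (exp (I * ↑(a - b)) - 1) := by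
    rw [mul_sub, mul_one, ← exp_add]; push_cast; ring_nf
  rw [this, norm_mul, norm_exp_I_mul_ofReal, one_mul]
  exact Real.norm_exp_I_mul_ofReal_sub_one_le

/-- Jordan's inequality, read on the circle. -/
theorem norm_coe_le_pi_div_two_mul_norm_exp_I_mul_sub_one (θ : ℝ) :
    ‖(θ : 𝕋)‖ ≤ π / 2 * ‖exp (I * θ) - 1‖ := by
  set r := θ - round ((2 * π)⁻¹ * θ) * (2 * π)
  have hnorm : ‖(θ : 𝕋)‖ = |r| := AddCircle.norm_eq _
  have hr : |r| ≤ π := by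
    have := AddCircle.norm_le_half_period (2 * π) (x := (θ : 𝕋)) (by positivity)
    rwa [hnorm, abs_of_pos (by positivity : (0 : ℝ) < 2 * π),
      mul_div_cancel_left₀ _ two_ne_zero] at this
  have hexp : exp (I * θ) = exp (I * r) := by
    rw [show (I * r : ℂ) = I * θ - round ((2 * π)⁻¹ * θ) * (2 * π * I) by simp [r]; ring,
      exp_sub, exp_int_mul_two_pi_mul_I, div_one]
  rw [hnorm, hexp, norm_exp_I_mul_ofReal_sub_one, norm_mul, Real.norm_two, Real.norm_eq_abs]
  have := Real.mul_abs_le_abs_sin (x := r / 2) (by rw [abs_div, abs_two]; linarith)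
  rw [abs_div, abs_two] at this
  have hπ := Real.pi_pos
  field_simp at this ⊢
  nlinarith

theorem norm_one_add_le_two_sub {z : ℂ} (hz : ‖z‖ = 1) : ‖1 + z‖ ≤ 2 - ‖z - 1‖ ^ 2 / 4 := by
  have hpar := parallelogram_law_with_norm ℝ (1 : ℂ) z
  rw [norm_one, hz, norm_sub_rev] at hpar
  have h2 : ‖z - 1‖ ≤ 2 := (norm_sub_le _ _).trans (by rw [hz, norm_one]; norm_num)
  nlinarith [norm_nonneg (1 + z), norm_nonneg (z - 1)]

theorem norm_one_add_sum_le {ι : Type*} [Fintype ι] {z : ι → ℂ} (hz : ∀ j, ‖z j‖ = 1) (j₀ : ι) :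
    ‖1 + ∑ j, z j‖ ≤ Fintype.card ι + 1 - ‖z j₀ - 1‖ ^ 2 / 4 := by
  classical
  have hrest : ‖∑ j ∈ univ.erase j₀, z j‖ ≤ #(univ.erase j₀) :=
    (norm_sum_le _ _).trans (by simp [hz])
  have hcard : (#(univ.erase j₀) : ℝ) + 1 = Fintype.card ι := by
    exact_mod_cast card_erase_add_one (mem_univ j₀)
  rw [← add_sum_erase _ _ (mem_univ j₀), ← add_assoc]
  linarith [norm_add_le (1 + z j₀) (∑ j ∈ univ.erase j₀, z j), norm_one_add_le_two_sub (hz j₀)]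

theorem norm_one_add_sum_exp_I_mul_le {ι : Type*} [Fintype ι] {θ : ι → ℝ} {δ : ℝ} (hδ : 0 ≤ δ)
    {j : ι} (hj : δ ≤ ‖(θ j : 𝕋)‖) :
    ‖1 + ∑ i, exp (I * θ i)‖ ≤ Fintype.card ι + 1 - (2 / π * δ) ^ 2 / 4 := by
  have hj' : 2 / π * δ ≤ ‖exp (I * θ j) - 1‖ := by
    have := hj.trans (norm_coe_le_pi_div_two_mul_norm_exp_I_mul_sub_one _)
    rw [div_mul_eq_mul_div, div_le_iff₀ Real.pi_pos]
    linarith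
  refine (norm_one_add_sum_le (fun i => norm_exp_I_mul_ofReal (θ i)) j).trans
    (sub_le_sub_left ?_ _)
  exact div_le_div_of_nonneg_right (pow_le_pow_left₀ (by positivity) hj' 2) (by norm_num)

theorem two_pi_div_le_norm_coe_of_not_dvd {M : ℕ} {d : ℤ} (hd : ¬ (M : ℤ) ∣ d) :
    2 * π / M ≤ ‖((2 * π * d / M : ℝ) : 𝕋)‖ := by
  have : Fact (0 < 2 * π) := ⟨by positivity⟩
  rcases Nat.eq_zero_or_pos M with rfl | hM
  · simp
  set u : 𝕋 := ((2 * π * d / M : ℝ) : 𝕋)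
  have hMu : M • u = 0 := by
    rw [← AddCircle.coe_nsmul, nsmul_eq_mul, mul_div_cancel₀ _ (by positivity),
      AddCircle.coe_eq_zero_iff]
    exact ⟨d, by rw [zsmul_eq_mul]; ring⟩
  have hu : u ≠ 0 := fun hu => hd <| by
    obtain ⟨m, hm⟩ := (AddCircle.coe_eq_zero_iff _).1 hu
    refine ⟨m, ?_⟩
    rw [zsmul_eq_mul, eq_div_iff (by positivity)] at hm
    have : (d : ℝ) = M * m :=
      mul_left_cancel₀ (by positivity : (2 * π : ℝ) ≠ 0) (by linarith)
    exact_mod_cast this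
  have hord : addOrderOf u ≤ M := Nat.le_of_dvd hM (addOrderOf_dvd_of_nsmul_eq_zero hMu)
  have := AddCircle.le_add_order_smul_norm_of_isOfFinAddOrder
    (isOfFinAddOrder_iff_nsmul_eq_zero.2 ⟨M, hM, hMu⟩) hu
  rw [nsmul_eq_mul] at this
  rw [div_le_iff₀' (by positivity)]
  exact this.trans (mul_le_mul_of_nonneg_right (by exact_mod_cast hord) (norm_nonneg _))

theorem norm_interval_average_le {E : Type*} [NormedAddCommGroup E] [NormedSpace ℝ E]
    {f : ℝ → E} {C : ℝ} (hf : ∀ t, ‖f t‖ ≤ C) {a b : ℝ} (hab : a ≠ b) :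
    ‖⨍ t in a..b, f t‖ ≤ C := by
  have hba : 0 < |b - a| := abs_pos.2 (sub_ne_zero.2 hab.symm)
  rw [interval_average_eq, norm_smul, norm_inv, Real.norm_eq_abs, inv_mul_le_iff₀ hba, mul_comm]
  exact intervalIntegral.norm_integral_le_of_norm_le_const fun t _ => hf t

theorem norm_le_of_tendsto_average {E : Type*} [NormedAddCommGroup E] [NormedSpace ℝ E]
    {f : ℝ → E} {l : E} (hl : Tendsto (fun T => ⨍ t in 0..T, f t) atTop (𝓝 l)) {C : ℝ}
    (hf : ∀ t, ‖f t‖ ≤ C) : ‖l‖ ≤ C :=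
  le_of_tendsto hl.norm <| (eventually_gt_atTop 0).mono fun _ hT =>
    norm_interval_average_le hf hT.ne

theorem tendsto_average_exp_I_mul (μ : ℝ) :
    Tendsto (fun T => ⨍ t in 0..T, exp (I * ↑(μ * t))) atTop (𝓝 (if μ = 0 then 1 else 0)) := by
  split_ifs with hμ
  · refine tendsto_const_nhds.congr' <| (eventually_gt_atTop 0).mono fun T hT => ?_
    simp [hμ, interval_average_eq, hT.ne']
  · have hIμ : I * μ ≠ 0 := mul_ne_zero I_ne_zero (ofReal_ne_zero.2 hμ)
    have hbound : ∀ T, ‖∫ t in (0 : ℝ)..T, exp (I * ↑(μ * t))‖ ≤ 2 / |μ| := fun T => by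
      simp_rw [ofReal_mul, ← mul_assoc]
      rw [integral_exp_mul_complex hIμ, norm_div, norm_mul, norm_I, one_mul, norm_real,
        Real.norm_eq_abs, div_le_div_iff_of_pos_right (abs_pos.2 hμ)]
      refine (norm_sub_le _ _).trans ?_
      rw [mul_assoc, ← ofReal_mul, norm_exp_I_mul_ofReal, ofReal_zero, mul_zero, exp_zero, norm_one]
      norm_num
    refine squeeze_zero_norm' ((eventually_gt_atTop 0).mono fun T hT => ?_)
      (tendsto_const_nhds (x := 2 / |μ|) |>.div_atTop tendsto_id)
    rw [interval_average_eq, norm_smul, sub_zero, norm_inv, Real.norm_of_nonneg hT.le,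
      inv_mul_eq_div, id]
    exact div_le_div_of_nonneg_right (hbound T) hT.le

section TrigPoly

variable {ι : Type*} [Fintype ι]

noncomputable def trigPoly (c : ι → ℂ) (μ : ι → ℝ) (t : ℝ) : ℂ := ∑ k, c k * exp (I * ↑(μ k * t))

theorem norm_trigPoly_le (c : ι → ℂ) (μ : ι → ℝ) (t : ℝ) : ‖trigPoly c μ t‖ ≤ ∑ k, ‖c k‖ :=
  (norm_sum_le _ _).trans_eq <| by simp only [norm_mul, norm_exp_I_mul_ofReal, mul_one]

theorem trigPoly_add_sub (c : ι → ℂ) (μ : ι → ℝ) (τ t : ℝ) :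
    trigPoly c μ (t + τ) - trigPoly c μ t =
      trigPoly (fun k => c k * (exp (I * ↑(μ k * τ)) - 1)) μ t := by
  simp only [trigPoly, ← sum_sub_distrib]
  refine sum_congr rfl fun k _ => ?_
  rw [show I * ↑(μ k * (t + τ)) = I * ↑(μ k * t) + I * ↑(μ k * τ) by push_cast; ring, exp_add]
  ring

theorem trigPoly_sub_const (c : ι → ℂ) (μ : ι → ℝ) (ν t : ℝ) :
    trigPoly c (fun k => μ k - ν) t = exp (-(I * ↑(ν * t))) * trigPoly c μ t := by
  simp only [trigPoly, mul_sum]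
  refine sum_congr rfl fun k _ => ?_
  rw [mul_left_comm, ← exp_add]
  congr 2
  push_cast; ring

theorem lipschitzWith_trigPoly (c : ι → ℂ) (μ : ι → ℝ) :
    LipschitzWith (∑ k, ‖c k‖₊ * ‖μ k‖₊) (trigPoly c μ) := by
  refine LipschitzWith.of_dist_le_mul fun a b => ?_
  simp only [dist_eq_norm, trigPoly, ← sum_sub_distrib, ← mul_sub, NNReal.coe_sum,
    NNReal.coe_mul, coe_nnnorm, sum_mul]
  refine (norm_sum_le _ _).trans (sum_le_sum fun k _ => ?_)
  rw [norm_mul, mul_assoc, Real.norm_eq_abs, Real.norm_eq_abs, ← abs_mul, mul_sub]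
  exact mul_le_mul_of_nonneg_left (norm_exp_I_mul_sub_exp_I_mul_le _ _) (norm_nonneg _)

theorem trigPoly_pow (c : ι → ℂ) (μ : ι → ℝ) (k : ℕ) (t : ℝ) :
    trigPoly c μ t ^ k =
      trigPoly (fun σ : Fin k → ι => ∏ i, c (σ i)) (fun σ => ∑ i, μ (σ i)) t := by
  simp only [trigPoly, Fintype.sum_pow, prod_mul_distrib, ← exp_sum, sum_mul, ← mul_sum]
  push_cast
  rfl

theorem ofReal_norm_trigPoly_sq (c : ι → ℂ) (μ : ι → ℝ) (t : ℝ) :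
    ((‖trigPoly c μ t‖ ^ 2 : ℝ) : ℂ) =
      trigPoly (fun p : ι × ι => c p.1 * conj (c p.2)) (fun p => μ p.1 - μ p.2) t := by
  rw [← normSq_eq_norm_sq, ← mul_conj, trigPoly, map_sum, sum_mul_sum, ← Fintype.sum_prod_type']
  refine sum_congr rfl fun p _ => ?_
  rw [map_mul, ← exp_conj, mul_mul_mul_comm, ← exp_add]
  congr 2
  simp only [map_mul, conj_I, conj_ofReal]
  push_cast; ring

theorem tendsto_average_trigPoly (c : ι → ℂ) (μ : ι → ℝ) :
    Tendsto (fun T => ⨍ t in 0..T, trigPoly c μ t) atTop (𝓝 (∑ k with μ k = 0, c k)) := by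
  have hsum : ∀ T, ⨍ t in 0..T, trigPoly c μ t =
      ∑ k, c k * ⨍ t in 0..T, exp (I * ↑(μ k * t)) := fun T => by
    simp only [interval_average_eq, trigPoly]
    rw [intervalIntegral.integral_finsetSum fun k _ => by
      exact (Continuous.intervalIntegrable (by fun_prop) _ _)]
    simp [intervalIntegral.integral_const_mul, mul_sum, mul_left_comm]
  simp_rw [hsum, sum_filter]
  refine tendsto_finsetSum _ fun k _ => ?_
  simpa using (tendsto_average_exp_I_mul (μ k)).const_mul (c k)

theorem norm_le_of_forall_norm_trigPoly_le {μ : ι → ℝ}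
    (hμ : Function.Injective μ) {c : ι → ℂ} {C : ℝ} (hC : ∀ t, ‖trigPoly c μ t‖ ≤ C) (j : ι) :
    ‖c j‖ ≤ C := by
  have hlim := tendsto_average_trigPoly c (fun k => μ k - μ j)
  have hj : ∑ k with μ k - μ j = 0, c k = c j := by
    rw [sum_eq_single_of_mem j (by simp)]
    intro k hk hkj
    exact absurd (hμ (sub_eq_zero.1 (mem_filter.1 hk).2)) hkj
  rw [hj] at hlim
  refine norm_le_of_tendsto_average hlim fun t => ?_
  rw [trigPoly_sub_const, norm_mul, norm_exp, neg_re, mul_re]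
  simpa using hC t

end TrigPoly

theorem sq_card_le_card_mul_card_fiber_pairs {α β : Type*} [Fintype α] [Fintype β]
    [DecidableEq β] (e : α → β) :
    Fintype.card α ^ 2 ≤ Fintype.card β * #{p : α × α | e p.1 = e p.2} := by
  have hpairs : #{p : α × α | e p.1 = e p.2} = ∑ b, #{a | e a = b} ^ 2 := by
    rw [card_eq_sum_card_fiberwise (f := fun p : α × α => e p.1) fun _ _ => mem_univ _]
    refine sum_congr rfl fun b _ => ?_
    rw [sq, ← card_product]
    congr 1
    ext p
    simp only [mem_filter, mem_univ, true_and, mem_product]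
    constructor
    · rintro ⟨h, rfl⟩; exact ⟨rfl, h.symm⟩
    · rintro ⟨h1, h2⟩; exact ⟨h1.trans h2.symm, h1⟩
  rw [hpairs, ← card_univ, card_eq_sum_card_fiberwise (f := e) fun _ _ => mem_univ _]
  exact sq_sum_le_card_mul_sum_sq

theorem le_of_forall_pow_le_mul_pow {a b : ℝ} (hb : 0 ≤ b) (d : ℕ)
    (h : ∀ k : ℕ, a ^ k ≤ (k + 1) ^ d * b ^ k) : a ≤ b := by
  by_contra! hba
  have ha : 0 < a := hb.trans_lt hba
  have hr : |b / a| < 1 := by rwa [abs_div, abs_of_nonneg hb, abs_of_pos ha, div_lt_one ha]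
  obtain ⟨k, hk, hk1⟩ := ((tendsto_pow_const_mul_const_pow_of_abs_lt_one d hr).const_mul
    (2 ^ d)).eventually_lt_const (by norm_num : (2 : ℝ) ^ d * 0 < 1) |>.and
    (eventually_ge_atTop 1) |>.exists
  have hk2 : ((k : ℝ) + 1) ^ d ≤ 2 ^ d * (k : ℝ) ^ d := by
    rw [← mul_pow]; gcongr; linarith [(Nat.one_le_cast (α := ℝ)).2 hk1]
  have := (h k).trans (mul_le_mul_of_nonneg_right hk2 (pow_nonneg hb k))
  rw [div_pow, ← mul_div_assoc, ← mul_div_assoc, div_lt_one (pow_pos ha k), ← mul_assoc] at hk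
  linarith

section Bohr

variable {ι : Type*} [Fintype ι] [DecidableEq ι]

def letterCount {k : ℕ} (σ : Fin k → ι) (o : ι) : Fin (k + 1) :=
  ⟨#{i | σ i = o}, Nat.lt_succ_of_le ((card_le_univ _).trans_eq (Fintype.card_fin k))⟩

@[to_additive]
theorem prod_comp_eq_prod_pow_letterCount {M : Type*} [CommMonoid M] {k : ℕ} (σ : Fin k → ι)
    (f : ι → M) : ∏ i, f (σ i) = ∏ o, f o ^ (letterCount σ o : ℕ) := by
  rw [← prod_fiberwise_of_maps_to (fun i _ => mem_univ (σ i))]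
  refine prod_congr rfl fun o _ => ?_
  rw [prod_congr rfl fun i hi => by rw [(mem_filter.1 hi).2], prod_const]
  rfl

theorem AffineIndependent.letterCount_eq {Λ : ι → ℝ} (hΛ : AffineIndependent ℚ Λ) {k : ℕ}
    {σ σ' : Fin k → ι} (h : ∑ i, Λ (σ i) = ∑ i, Λ (σ' i)) : letterCount σ = letterCount σ' := by
  have htotal : ∀ σ : Fin k → ι, ∑ o, ((letterCount σ o : ℕ) : ℚ) = k := fun σ => by
    have := sum_comp_eq_sum_nsmul_letterCount σ (fun _ => (1 : ℚ))
    simpa [eq_comm] using this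
  set w : ι → ℚ := fun o => (letterCount σ o : ℕ) - (letterCount σ' o : ℕ)
  have hw : ∑ o, w o = 0 := by simp [w, sum_sub_distrib, htotal]
  have hwΛ : univ.weightedVSub Λ w = (0 : ℝ) := by
    rw [weightedVSub_eq_linear_combination _ hw]
    simp only [w, sub_smul, sum_sub_distrib, Nat.cast_smul_eq_nsmul,
      ← sum_comp_eq_sum_nsmul_letterCount, h, sub_self]
  funext o
  have := (affineIndependent_iff_of_fintype ℚ Λ).1 hΛ w hw hwΛ o
  exact Fin.ext (by exact_mod_cast sub_eq_zero.1 this)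

theorem card_pairs_sum_eq_le_pow {Λ : ι → ℝ} (hΛ : AffineIndependent ℚ Λ) {z : ι → ℂ}
    (hz : ∀ o, ‖z o‖ = 1) {B : ℝ} (hB : ∀ t, ‖trigPoly z Λ t‖ ≤ B) (k : ℕ) :
    (#{p : (Fin k → ι) × (Fin k → ι) | ∑ i, Λ (p.1 i) = ∑ i, Λ (p.2 i)} : ℝ) ≤ B ^ (2 * k) := by
  -- `|F|^{2k}` is a trigonometric polynomial indexed by pairs of words; its mean counts the
  -- pairs with equal frequency sums, on which affine independence makes the coefficient `1`.
  set w : (Fin k → ι) → ℂ := fun σ => ∏ i, z (σ i)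
  have hpow : ∀ t, trigPoly (fun p : (Fin k → ι) × (Fin k → ι) => w p.1 * conj (w p.2))
      (fun p => ∑ i, Λ (p.1 i) - ∑ i, Λ (p.2 i)) t = ((‖trigPoly z Λ t‖ ^ (2 * k) : ℝ) : ℂ) :=
    fun t => by rw [pow_mul', ← norm_pow, trigPoly_pow, ofReal_norm_trigPoly_sq]
  have hdiag : ∀ p ∈ ({p | ∑ i, Λ (p.1 i) = ∑ i, Λ (p.2 i)} :
      Finset ((Fin k → ι) × (Fin k → ι))), w p.1 * conj (w p.2) = 1 := fun p hp => by
    have hcount := hΛ.letterCount_eq (mem_filter.1 hp).2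
    have : w p.1 = w p.2 := by simp only [w, prod_comp_eq_prod_pow_letterCount, hcount]
    rw [this, mul_conj, normSq_eq_norm_sq]
    simp [w, hz]
  have hlim := tendsto_average_trigPoly (fun p : (Fin k → ι) × (Fin k → ι) => w p.1 * conj (w p.2))
    (fun p => ∑ i, Λ (p.1 i) - ∑ i, Λ (p.2 i))
  simp_rw [sub_eq_zero] at hlim
  rw [sum_congr rfl hdiag, sum_const, nsmul_one] at hlim
  simpa using norm_le_of_tendsto_average hlim fun t => by
    rw [hpow, norm_real, Real.norm_of_nonneg (by positivity)]
    exact pow_le_pow_left₀ (norm_nonneg _) (hB t) _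

/-- Bohr's lemma. -/
theorem card_le_of_forall_norm_trigPoly_le {Λ : ι → ℝ} (hΛ : AffineIndependent ℚ Λ)
    {z : ι → ℂ} (hz : ∀ o, ‖z o‖ = 1) {B : ℝ} (hB : ∀ t, ‖trigPoly z Λ t‖ ≤ B) :
    (Fintype.card ι : ℝ) ≤ B := by
  have hB0 : 0 ≤ B := (norm_nonneg _).trans (hB 0)
  refine (pow_le_pow_iff_left₀ (Nat.cast_nonneg _) hB0 two_ne_zero).1 <|
    le_of_forall_pow_le_mul_pow (sq_nonneg B) (Fintype.card ι) fun k => ?_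
  have hcount : #{p : (Fin k → ι) × (Fin k → ι) | letterCount p.1 = letterCount p.2} ≤
      #{p : (Fin k → ι) × (Fin k → ι) | ∑ i, Λ (p.1 i) = ∑ i, Λ (p.2 i)} :=
    card_le_card <| monotone_filter_right _ fun p _ hp => by
      simp only [sum_comp_eq_sum_nsmul_letterCount, hp]
  have hcs := sq_card_le_card_mul_card_fiber_pairs (letterCount (ι := ι) (k := k))
  simp only [Fintype.card_fun, Fintype.card_fin] at hcs
  have hnat := hcs.trans (Nat.mul_le_mul_left _ hcount)
  calc ((Fintype.card ι : ℝ) ^ 2) ^ k = ((Fintype.card ι : ℝ) ^ k) ^ 2 := by ring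
    _ ≤ ((k : ℝ) + 1) ^ Fintype.card ι * (#{p : (Fin k → ι) × (Fin k → ι) |
          ∑ i, Λ (p.1 i) = ∑ i, Λ (p.2 i)} : ℝ) := by exact_mod_cast hnat
    _ ≤ (k + 1) ^ Fintype.card ι * (B ^ 2) ^ k := by
        rw [← pow_mul]
        gcongr
        exact card_pairs_sum_eq_le_pow hΛ hz hB k

end Bohr

section Torus

variable {ι : Type*}

noncomputable def torusFlow (lam : ι → ℝ) : ℝ →+ (ι → 𝕋) :=
  AddMonoidHom.pi fun j => (QuotientAddGroup.mk' _).comp (AddMonoidHom.mulLeft (lam j))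

@[simp]
theorem torusFlow_apply (lam : ι → ℝ) (t : ℝ) (j : ι) :
    torusFlow lam t j = ((lam j * t : ℝ) : 𝕋) := rfl

theorem lipschitzWith_torusFlow [Fintype ι] (lam : ι → ℝ) :
    LipschitzWith ‖lam‖₊ (torusFlow lam) := by
  refine LipschitzWith.of_dist_le_mul fun s t => (dist_pi_le_iff (by positivity)).2 fun j => ?_
  rw [torusFlow_apply, torusFlow_apply, dist_eq_norm, ← AddCircle.coe_sub, ← mul_sub,
    Real.dist_eq, coe_nnnorm]
  refine (QuotientAddGroup.norm_mk_le_norm).trans ?_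
  rw [Real.norm_eq_abs, abs_mul]
  exact mul_le_mul_of_nonneg_right ((Real.norm_eq_abs _).symm.trans_le (norm_le_pi_norm lam j))
    (abs_nonneg _)

theorem LinearIndependent.affineIndependent_option_elim [Fintype ι] {lam : ι → ℝ}
    (hlam : LinearIndependent ℚ lam) : AffineIndependent ℚ fun o : Option ι => o.elim 0 lam := by
  rw [affineIndependent_iff_of_fintype]
  intro w hw hwv
  rw [weightedVSub_eq_linear_combination _ hw, Fintype.sum_option] at hwv
  simp only [Option.elim_none, smul_zero, zero_add, Option.elim_some] at hwv
  have hsome : ∀ j, w (some j) = 0 := Fintype.linearIndependent_iff.1 hlam _ hwv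
  rw [Fintype.sum_option] at hw
  rintro (_ | j)
  · simpa [hsome] using hw
  · exact hsome j

/-- Kronecker's theorem. -/
theorem denseRange_torusFlow [Fintype ι] {lam : ι → ℝ} (hlam : LinearIndependent ℚ lam) :
    DenseRange (torusFlow lam) := by
  classical
  rw [Metric.denseRange_iff]
  intro y δ hδ
  choose x hx using fun j => QuotientAddGroup.mk_surjective (y j)
  obtain rfl : (fun j => ((x j : ℝ) : 𝕋)) = y := funext hx
  -- A uniform gap below `n + 1` for the frequencies `(0, λ)` would contradict Bohr's lemma.
  by_contra! hfar
  have hbound : ∀ t, ‖trigPoly (fun o : Option ι => exp (-(I * ↑(o.elim 0 x))))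
      (fun o => o.elim 0 lam) t‖ ≤ Fintype.card ι + 1 - (2 / π * δ) ^ 2 / 4 := fun t => by
    obtain ⟨j, hj⟩ : ∃ j, δ ≤ ‖((lam j * t - x j : ℝ) : 𝕋)‖ := by
      by_contra! h
      refine not_lt.2 (hfar t) ((dist_pi_lt_iff hδ).2 fun j => ?_)
      rw [dist_comm, dist_eq_norm, torusFlow_apply, ← AddCircle.coe_sub]
      exact h j
    have hterm : ∀ j, exp (-(I * ↑(x j))) * exp (I * ↑(lam j * t)) =
        exp (I * ↑(lam j * t - x j)) := fun j => by
      rw [← exp_add]; push_cast; ring_nf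
    simp only [trigPoly, Fintype.sum_option, Option.elim_none, Option.elim_some, hterm,
      ofReal_zero, mul_zero, neg_zero, exp_zero, zero_mul, one_mul]
    exact norm_one_add_sum_exp_I_mul_le hδ.le hj
  have := card_le_of_forall_norm_trigPoly_le hlam.affineIndependent_option_elim
    (fun o => by rw [← mul_neg, ← ofReal_neg, norm_exp_I_mul_ofReal]) hbound
  rw [Fintype.card_option, Nat.cast_succ] at this
  nlinarith [show 0 < 2 / π * δ by positivity]

noncomputable def torusGrid (M : ℕ) (v : ι → Fin M) : ι → 𝕋 :=
  fun j => ((2 * π * (v j : ℕ) / M : ℝ) : 𝕋)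

theorem two_pi_div_le_dist_torusGrid [Fintype ι] {M : ℕ} {v w : ι → Fin M}
    (hvw : v ≠ w) : 2 * π / M ≤ dist (torusGrid M v) (torusGrid M w) := by
  obtain ⟨j, hj⟩ := Function.ne_iff.1 hvw
  refine le_trans ?_ (dist_le_pi_dist _ _ j)
  rw [torusGrid, torusGrid, dist_eq_norm, ← AddCircle.coe_sub, ← sub_div, ← mul_sub]
  have hd : ¬ (M : ℤ) ∣ ((v j : ℕ) - (w j : ℕ) : ℤ) := fun hdvd => hj <| Fin.ext <| by
    have := Int.eq_zero_of_abs_lt_dvd hdvd (by rw [abs_lt]; omega)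
    omega
  exact_mod_cast two_pi_div_le_norm_coe_of_not_dvd hd

theorem pow_card_le_card_of_forall_exists_dist_le [Fintype ι] {M : ℕ} {r : ℝ}
    (hr : 2 * r < 2 * π / M) {C : Finset (ι → 𝕋)} (hC : ∀ y, ∃ c ∈ C, dist y c ≤ r) :
    M ^ Fintype.card ι ≤ #C := by
  classical
  obtain ⟨c, -, hc⟩ := hC 0
  lift r to NNReal using dist_nonneg.trans hc
  have hinj : Function.Injective (torusGrid (ι := ι) M) := fun v w hvw => by
    by_contra hne
    obtain ⟨j, -⟩ := Function.ne_iff.1 hne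
    have hM : (0 : ℝ) < M := by exact_mod_cast (v j).pos
    have := two_pi_div_le_dist_torusGrid hne
    rw [hvw, dist_self] at this
    exact (div_pos (by positivity) hM).not_ge this
  have hsep : Metric.IsSeparated ((2 * r : NNReal) : ENNReal)
      (Set.range (torusGrid (ι := ι) M)) := by
    rintro _ ⟨v, rfl⟩ _ ⟨w, rfl⟩ hvw
    rw [edist_dist, ← ENNReal.ofReal_coe_nnreal, ENNReal.ofReal_lt_ofReal_iff_of_nonneg
      (by positivity)]
    exact hr.trans_le (two_pi_div_le_dist_torusGrid fun h => hvw (h ▸ rfl))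
  have hcov : Metric.IsCover r Set.univ (C : Set (ι → 𝕋)) := fun y _ => by
    obtain ⟨c, hc, hyc⟩ := hC y
    exact ⟨c, hc, show edist y c ≤ r from
      edist_le_coe.2 (by rw [← NNReal.coe_le_coe, coe_nndist]; exact hyc)⟩
  have := hinj.encard_range.trans <| (hsep.encard_le_packingNumber (Set.subset_univ _)).trans <|
    (Metric.packingNumber_two_mul_le_externalCoveringNumber r _).trans
      hcov.externalCoveringNumber_le_encard
  rw [Set.encard_coe_eq_coe_finsetCard, ENat.card_eq_coe_fintype_card, Fintype.card_fun,
    Fintype.card_fin] at this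
  exact_mod_cast this


theorem norm_torusFlow_le_of_iSup_lt [Fintype ι] {μ : ι → ℝ}
    (hμ : Function.Injective μ) {c : ι → ℂ} {a ε τ : ℝ} (ha : 0 < a) (hc : ∀ k, a ≤ ‖c k‖)
    (hτ : ⨆ t, ‖trigPoly c μ (t + τ) - trigPoly c μ t‖ < ε) :
    ‖torusFlow μ τ‖ ≤ π / 2 * (ε / a) := by
  have hbdd : BddAbove (Set.range fun t => ‖trigPoly c μ (t + τ) - trigPoly c μ t‖) :=
    ⟨_, by rintro _ ⟨t, rfl⟩; dsimp only; rw [trigPoly_add_sub]; exact norm_trigPoly_le _ _ t⟩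
  have hε : 0 ≤ ε := (norm_nonneg _).trans ((le_ciSup hbdd 0).trans hτ.le)
  refine (pi_norm_le_iff_of_nonneg (by positivity)).2 fun k => ?_
  have hk := norm_le_of_forall_norm_trigPoly_le hμ
    (fun t => (trigPoly_add_sub c μ τ t).symm ▸ le_ciSup hbdd t) k
  rw [norm_mul] at hk
  refine (norm_coe_le_pi_div_two_mul_norm_exp_I_mul_sub_one _).trans ?_
  gcongr
  rw [le_div_iff₀ ha, mul_comm]
  exact ((mul_le_mul_of_nonneg_right (hc k) (norm_nonneg _)).trans hk).trans hτ.le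

theorem exists_le_floor_dist_le {X : Type*} [SeminormedAddCommGroup X] {φ : ℝ →+ X}
    (hdense : DenseRange φ) {K : NNReal} (hφ : LipschitzWith K φ) {L δ h : ℝ} (hδ : 0 < δ)
    (hh : 0 < h) (hKh : K * h ≤ δ) (hL : ∀ a, ∃ τ ∈ Set.Icc a (a + L), ‖φ τ‖ ≤ δ) (y : X) :
    ∃ i ≤ ⌊L / h⌋₊, dist y (φ (i * h)) ≤ 3 * δ := by
  obtain ⟨a, ha⟩ := hdense.exists_dist_lt (-y) hδ
  obtain ⟨τ, ⟨haτ, hτL⟩, hτ⟩ := hL a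
  set s := τ - a
  have hs : 0 ≤ s / h := div_nonneg (by linarith) hh.le
  refine ⟨⌊s / h⌋₊, Nat.floor_mono (div_le_div_of_nonneg_right (by linarith) hh.le), ?_⟩
  have hfloor : dist s (⌊s / h⌋₊ * h) ≤ h := by
    have h1 := Nat.floor_le hs
    have h2 := Nat.lt_floor_add_one (s / h)
    rw [le_div_iff₀ hh] at h1
    rw [div_lt_iff₀ hh] at h2
    rw [Real.dist_eq, abs_of_nonneg (by linarith)]
    linarith
  have hstep : dist (φ s) (φ (⌊s / h⌋₊ * h)) ≤ δ :=
    (hφ.dist_le_mul _ _).trans ((mul_le_mul_of_nonneg_left hfloor K.2).trans hKh)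
  have hys : dist y (φ s) ≤ 2 * δ := by
    rw [map_sub, dist_eq_norm, show y - (φ τ - φ a) = -(-y - φ a) - φ τ by abel]
    rw [dist_eq_norm] at ha
    linarith [norm_sub_le (-(-y - φ a)) (φ τ), norm_neg (-y - φ a)]
  linarith [dist_triangle y (φ s) (φ (⌊s / h⌋₊ * h))]

theorem pow_card_le_of_forall_exists_norm_torusFlow_le [Fintype ι] [Nonempty ι] {lam : ι → ℝ}
    (hlam : LinearIndependent ℚ lam) {L δ : ℝ} (hδ : 0 < δ)
    (hL : ∀ a, ∃ τ ∈ Set.Icc a (a + L), ‖torusFlow lam τ‖ ≤ δ) {M : ℕ}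
    (hM : 6 * δ < 2 * π / M) : (M : ℝ) ^ Fintype.card ι ≤ ‖lam‖ * L / δ + 1 := by
  have hK : 0 < ‖lam‖ := norm_pos_iff.2 fun h0 =>
    hlam.ne_zero (Classical.arbitrary ι) (by simp [h0])
  set h := δ / ‖lam‖
  have hh : 0 < h := by positivity
  have hL0 : 0 ≤ L := by obtain ⟨τ, hτ, -⟩ := hL 0; linarith [hτ.1, hτ.2]
  have hcover : ∀ y, ∃ c ∈ (range (⌊L / h⌋₊ + 1)).image fun i : ℕ => torusFlow lam (i * h),
      dist y c ≤ 3 * δ := fun y => by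
    obtain ⟨i, hi, hy⟩ := exists_le_floor_dist_le (denseRange_torusFlow hlam)
      (lipschitzWith_torusFlow lam) hδ hh (by simp [h, mul_div_cancel₀ _ hK.ne']) hL y
    exact ⟨_, mem_image_of_mem _ (mem_range.2 (Nat.lt_succ_of_le hi)), hy⟩
  have := (pow_card_le_card_of_forall_exists_dist_le (lt_of_eq_of_lt (by ring) hM) hcover).trans
    (card_image_le.trans (card_range _).le)
  calc (M : ℝ) ^ Fintype.card ι ≤ ⌊L / h⌋₊ + 1 := by exact_mod_cast this
    _ ≤ L / h + 1 := by gcongr; exact Nat.floor_le (by positivity)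
    _ = ‖lam‖ * L / δ + 1 := by simp only [h]; field_simp

end Torus

theorem exists_mul_one_div_pow_le_inclusion_length {ι : Type*} [Fintype ι] [Nonempty ι]
    {A : ι → ℂ} (hA : ∀ j, A j ≠ 0) {lam : ι → ℝ} (hlam : LinearIndependent ℚ lam) :
    ∃ C > 0, ∃ ε₁ > 0, ∀ ε, 0 < ε → ε < ε₁ → ∀ L : ℝ,
      (∀ a, ∃ τ ∈ Set.Icc a (a + L), ⨆ t, ‖trigPoly A lam (t + τ) - trigPoly A lam t‖ < ε) →
      C * (1 / ε) ^ (Fintype.card ι - 1) ≤ L := by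
  set a := univ.inf' univ_nonempty fun j => ‖A j‖
  have ha : 0 < a := (lt_inf'_iff _).2 fun j _ => norm_pos_iff.2 (hA j)
  have hK : 0 < ‖lam‖ := norm_pos_iff.2 fun h0 =>
    hlam.ne_zero (Classical.arbitrary ι) (by simp [h0])
  set N := Fintype.card ι
  have hN : N - 1 + 1 = N := Nat.sub_add_cancel Fintype.card_pos
  refine ⟨π * a ^ (N - 1) / (4 * ‖lam‖ * 6 ^ N), by positivity, a / 6, by positivity,
    fun ε hε hεa L hL => ?_⟩
  set δ := π / 2 * (ε / a)
  -- the largest grid size allowed by `6δ < 2π/M`, up to a factor `2`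
  set M := ⌊a / (3 * ε)⌋₊
  have hx : 2 ≤ a / (3 * ε) := by rw [le_div_iff₀ (by positivity)]; linarith
  have hM2 : (2 : ℝ) ≤ M := by exact_mod_cast Nat.le_floor (by exact_mod_cast hx)
  have hMx : (M : ℝ) ≤ a / (3 * ε) := Nat.floor_le (by positivity)
  have hM : a / (6 * ε) ≤ M := by
    rw [show a / (6 * ε) = a / (3 * ε) / 2 by field_simp; ring]
    linarith [Nat.lt_floor_add_one (a / (3 * ε))]
  have hsep : 6 * δ < 2 * π / M := by
    calc 6 * δ < 2 * π / (a / (3 * ε)) := by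
          simp only [δ]; field_simp; nlinarith [Real.pi_pos]
      _ ≤ 2 * π / M := div_le_div_of_nonneg_left (by positivity) (by linarith) hMx
  have hδ : 0 < δ := by positivity
  have hcount : (M : ℝ) ^ N ≤ ‖lam‖ * L / δ + 1 :=
    pow_card_le_of_forall_exists_norm_torusFlow_le hlam hδ
    (fun b => (hL b).imp fun τ hτ => ⟨hτ.1, norm_torusFlow_le_of_iSup_lt hlam.injective ha
      (fun j => inf'_le _ (mem_univ j)) hτ.2⟩) hsep
  have hMN : 2 ≤ (M : ℝ) ^ N :=
    le_self_pow₀ (by linarith) (by omega) |>.trans' hM2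
  calc π * a ^ (N - 1) / (4 * ‖lam‖ * 6 ^ N) * (1 / ε) ^ (N - 1)
      = δ / ‖lam‖ * (a / (6 * ε)) ^ N / 2 := by
        have key : ∀ m : ℕ, π * a ^ m / (4 * ‖lam‖ * 6 ^ (m + 1)) * (1 / ε) ^ m =
            δ / ‖lam‖ * (a / (6 * ε)) ^ (m + 1) / 2 := fun m => by
          simp only [δ, div_pow, mul_pow, one_div, inv_pow]; field_simp; ring
        simpa only [hN] using key (N - 1)
    _ ≤ δ / ‖lam‖ * (M : ℝ) ^ N / 2 := by gcongr
    _ ≤ L := by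
        have : δ * ((M : ℝ) ^ N - 1) ≤ ‖lam‖ * L := (le_div_iff₀' hδ).1 (by linarith)
        rw [div_mul_eq_mul_div, div_div, div_le_iff₀ (by positivity)]
        nlinarith [mul_nonneg hδ.le (sub_nonneg.2 hMN)]

/-- a quasiperiodic trigonometric polynomial with rationally independent
exponents is Lipschitz, and for every γ > 0 there is ε₀ > 0 such that every inclusion
length L of its set of ε-almost periods satisfies L ≥ (1/ε)^{n-1-γ} for 0 < ε < ε₀. -/
theorem inclusion_length_lower_bound (n : ℕ) (hn : 0 < n) (A : Fin n → ℂ)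
    (hA : ∀ j, A j ≠ 0) (lam : Fin n → ℝ) (hlam : LinearIndependent ℚ lam)
    (f : ℝ → ℂ)
    (hf : ∀ t : ℝ, f t = ∑ j, A j * Complex.exp (Complex.I * ((lam j * t : ℝ) : ℂ))) :
    (∃ K : NNReal, LipschitzWith K f) ∧
      ∀ γ > (0 : ℝ), ∃ ε₀ > (0 : ℝ), ∀ ε : ℝ, 0 < ε → ε < ε₀ → ∀ L : ℝ,
        (∀ a : ℝ, ∃ τ ∈ Set.Icc a (a + L), (⨆ t : ℝ, ‖f (t + τ) - f t‖) < ε) →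
        (1 / ε) ^ ((n : ℝ) - 1 - γ) ≤ L := by
  obtain rfl : f = trigPoly A lam := funext hf
  refine ⟨⟨_, lipschitzWith_trigPoly A lam⟩, fun γ hγ => ?_⟩
  have : Nonempty (Fin n) := ⟨⟨0, hn⟩⟩
  obtain ⟨C, hC, ε₁, hε₁, hbound⟩ := exists_mul_one_div_pow_le_inclusion_length hA hlam
  refine ⟨min ε₁ (C ^ (1 / γ)), by positivity, fun ε hε hεlt L hL => ?_⟩
  have hεC : ε ^ γ ≤ C := by
    have := Real.rpow_le_rpow hε.le (hεlt.le.trans (min_le_right _ _)) hγ.le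
    rwa [← Real.rpow_mul hC.le, one_div_mul_cancel hγ.ne', Real.rpow_one] at this
  calc (1 / ε) ^ ((n : ℝ) - 1 - γ) = ε ^ γ * (1 / ε) ^ (n - 1) := by
        rw [Real.rpow_sub (by positivity), ← Nat.cast_pred hn, Real.rpow_natCast, one_div,
          Real.inv_rpow hε.le, div_inv_eq_mul, mul_comm]
    _ ≤ C * (1 / ε) ^ (n - 1) := by gcongr
    _ ≤ L := by simpa using hbound ε hε (hεlt.trans_le (min_le_left _ _)) L hL
end
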